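/- arXiv:2008.09029 — 7 statements merged into one kernel-verified Lean document; each statement's English description precedes it below -/
import Mathlib

section
/- Let A be a meet semi-lattice which is locally finite, b ∈ A, and B = b̂ the principal lower set of b. Then ζ_A(V_B) = W_A(B): that is, if u = ζ_A(v) for some v ∈ ⊕_{a∈A}V and u satisfies u_a = u_c whenever â ∩ b̂ = ĉ ∩ b̂, then v is supported on b̂. -/
/-!
Suppose `v` is not supported on `b̂` and pick `m` minimal in the support of `v` with `m ≰ b`.
Then `m̂ ∩ b̂ = (m ⊓ b)̂ ∩ b̂`, so `u_m = u_{m ⊓ b}`.  The sums defining `u_m` and `u_{m ⊓ b}`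
differ exactly by the terms `v x` with `x ≤ m`, `x ≰ b`, and by minimality the only such `x` in
the support is `m` itself; hence `v m = 0`, a contradiction.
-/

open Finset

section

variable {A : Type*} [SemilatticeInf A]

theorem setOf_le_inf_and_le (a b : A) :
    {x : A | x ≤ a ⊓ b ∧ x ≤ b} = {x : A | x ≤ a ∧ x ≤ b} := by
  ext x
  simp only [Set.mem_ofPred_eq, le_inf_iff]
  tauto

theorem Finset.sum_filter_le_eq_sum_filter_le_inf_add [DecidableRel ((· ≤ ·) : A → A → Prop)]
    {V : Type*} [AddCommMonoid V] (s : Finset A) (f : A → V) {b m : A}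
    (hm : Minimal (· ∈ s.filter (¬ · ≤ b)) m) :
    ∑ x ∈ s.filter (· ≤ m), f x = ∑ x ∈ s.filter (· ≤ m ⊓ b), f x + f m := by
  have hms : m ∈ s ∧ ¬ m ≤ b := mem_filter.mp hm.prop
  have hbelow : (s.filter (· ≤ m)).filter (· ≤ b) = s.filter (· ≤ m ⊓ b) := by
    simp only [filter_filter, le_inf_iff]
  have hnot_below : (s.filter (· ≤ m)).filter (¬ · ≤ b) = {m} := by
    ext x
    simp only [mem_filter, mem_singleton]
    constructor
    · rintro ⟨⟨hxs, hxm⟩, hxb⟩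
      exact hm.eq_of_le (mem_filter.mpr ⟨hxs, hxb⟩) hxm
    · rintro rfl
      exact ⟨⟨hms.1, le_rfl⟩, hms.2⟩
  rw [← sum_filter_add_sum_filter_not (s.filter (· ≤ m)) (· ≤ b), hbelow, hnot_below,
    sum_singleton]

end

theorem stmt_7_general {A V : Type*} [SemilatticeInf A]
    [DecidableRel ((· ≤ ·) : A → A → Prop)]
    [AddCommGroup V]
    (b : A) (v : A →₀ V)
    (hW : ∀ a c : A,
      {x : A | x ≤ a ∧ x ≤ b} = {x : A | x ≤ c ∧ x ≤ b} →
        ∑ x ∈ v.support.filter (· ≤ a), v x =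
          ∑ x ∈ v.support.filter (· ≤ c), v x) :
    ∀ a : A, v a ≠ 0 → a ≤ b := by
  intro a ha
  by_contra hab
  obtain ⟨m, -, hm⟩ := (v.support.filter (¬ · ≤ b)).exists_le_minimal
    (mem_filter.mpr ⟨Finsupp.mem_support_iff.mpr ha, hab⟩)
  have hum := hW m (m ⊓ b) (setOf_le_inf_and_le m b).symm
  rw [v.support.sum_filter_le_eq_sum_filter_le_inf_add v hm, add_eq_left] at hum
  exact Finsupp.mem_support_iff.mp (mem_filter.mp hm.prop).1 hum

/-- In a locally finite meet semi-lattice `A`, if `u = ζ_A(v)` belongs to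
`W_A(b̂)` — i.e. `u_a = u_c` whenever `â ∩ b̂ = ĉ ∩ b̂` — then `v` is
supported on the principal lower set `b̂`. -/
theorem stmt_7 {A k V : Type*} [SemilatticeInf A] [LocallyFiniteOrder A]
    [DecidableRel ((· ≤ ·) : A → A → Prop)]
    [Field k] [AddCommGroup V] [Module k V]
    (b : A) (v : A →₀ V)
    (hW : ∀ a c : A,
      {x : A | x ≤ a ∧ x ≤ b} = {x : A | x ≤ c ∧ x ≤ b} →
        ∑ x ∈ v.support.filter (· ≤ a), v x =
          ∑ x ∈ v.support.filter (· ≤ c), v x) :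
    ∀ a : A, v a ≠ 0 → a ≤ b :=
  stmt_7_general b v hW
end

section
/- Let A be a finite meet semi-lattice, V a vector space, and (π_a)_{a∈A} a collection of linear endomorphisms of V satisfying π_a π_b = π_{a∧b} for all a,b. Define s_a = Σ_{b≤a} μ_A(a,b) π_b (the Möbius inversion, so π_a = Σ_{b≤a} s_b). Then for all a,b ∈ A: s_b ∘ π_a = [b ≤ a]·s_b. -/
/-!
Möbius inversion gives `π a = ∑_{e ≤ a} s e`. Hence
`s b * π a = ∑_{c ≤ b} μ(c, b) • π (c ⊓ a) = ∑_{e ≤ a} (∑_{e ≤ c ≤ b} μ(c, b)) • s e`,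
and the inner sum is `[e = b]`.
-/

open Finset IncidenceAlgebra

section Moebius

variable {A : Type*} [PartialOrder A] [LocallyFiniteOrder A] [DecidableEq A] [DecidableLE A]

theorem IncidenceAlgebra.eq_mu_of_zeta_mul_eq_one {𝕜 : Type*} [Ring 𝕜]
    {f : IncidenceAlgebra 𝕜 A} (h : zeta 𝕜 * f = 1) : f = mu 𝕜 :=
  calc f = mu 𝕜 * zeta 𝕜 * f := by rw [mu_mul_zeta, one_mul]
    _ = mu 𝕜 := by rw [mul_assoc, h, mul_one]

theorem eq_mu_of_sum_Icc_eq_ite {𝕜 : Type*} [Ring 𝕜] (m : A → A → 𝕜)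
    (hm : ∀ a b, b ≤ a → ∑ c ∈ Icc b a, m a c = if b = a then 1 else 0)
    {a b : A} (hba : b ≤ a) : m a b = mu 𝕜 b a := by
  let f : IncidenceAlgebra 𝕜 A :=
    ⟨fun b a => if b ≤ a then m a b else 0, fun _ _ h => if_neg h⟩
  have hf : zeta 𝕜 * f = 1 := by
    refine IncidenceAlgebra.ext fun b a hba => ?_
    rw [mul_apply, one_apply, ← hm a b hba]
    refine sum_congr rfl fun c hc => ?_
    obtain ⟨hbc, hca⟩ := mem_Icc.mp hc
    simp [f, hbc, hca]
  simpa [f, hba] using congr($(eq_mu_of_zeta_mul_eq_one hf) b a)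

variable [Fintype A] {M : Type*} [AddCommGroup M]

theorem sum_le_eq_of_eq_sum_mu_smul (π s : A → M)
    (hs : ∀ a, s a = ∑ b ∈ {b | b ≤ a}, mu ℤ b a • π b) (a : A) :
    ∑ b ∈ {b | b ≤ a}, s b = π a :=
  calc ∑ b ∈ {b | b ≤ a}, s b
      = ∑ b ∈ {b | b ≤ a}, ∑ c ∈ {c | c ≤ b}, mu ℤ c b • π c :=
        sum_congr rfl fun b _ => hs b
    _ = ∑ c ∈ {c | c ≤ a}, ∑ b ∈ Icc c a, mu ℤ c b • π c :=
        sum_comm' fun b c => by simp only [mem_filter, mem_univ, true_and, mem_Icc]; grind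
    _ = ∑ c ∈ {c | c ≤ a}, (if c = a then 1 else 0 : ℤ) • π c := by
        simp only [← sum_smul, sum_Icc_mu_right]
    _ = π a := by simp

end Moebius

theorem moebius_mul_eq_ite_of_mul_eq_inf {A R : Type*} [SemilatticeInf A] [Fintype A]
    [LocallyFiniteOrder A] [DecidableEq A] [DecidableLE A] [Ring R] (π s : A → R)
    (hπ : ∀ a b, π a * π b = π (a ⊓ b))
    (hs : ∀ a, s a = ∑ b ∈ {b | b ≤ a}, mu ℤ b a • π b) (a b : A) :
    s b * π a = if b ≤ a then s b else 0 :=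
  calc s b * π a
      = ∑ c ∈ {c | c ≤ b}, mu ℤ c b • π (c ⊓ a) := by
        simp only [hs b, sum_mul, smul_mul_assoc, hπ]
    _ = ∑ c ∈ {c | c ≤ b}, ∑ e ∈ {e | e ≤ c ⊓ a}, mu ℤ c b • s e := by
        simp only [← sum_le_eq_of_eq_sum_mu_smul π s hs, smul_sum]
    _ = ∑ e ∈ {e | e ≤ a}, ∑ c ∈ Icc e b, mu ℤ c b • s e :=
        sum_comm' fun c e => by
          simp only [mem_filter, mem_univ, true_and, mem_Icc, le_inf_iff]
          grind
    _ = ∑ e ∈ {e | e ≤ a}, (if e = b then 1 else 0 : ℤ) • s e := by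
        simp only [← sum_smul, sum_Icc_mu_left]
    _ = if b ≤ a then s b else 0 := by simp

/-- Let `A` be a finite meet semi-lattice and `(π_a)` endomorphisms of `V`
with `π_a π_b = π_{a ⊓ b}`.  With `s_a = ∑_{b ≤ a} μ_A(a,b) • π_b` (Möbius
inversion of `π`), one has `s_b ∘ π_a = [b ≤ a] • s_b`. -/
theorem stmt_8 {A k V : Type*} [SemilatticeInf A] [Fintype A] [DecidableEq A]
    [DecidableRel ((· ≤ ·) : A → A → Prop)]
    [Field k] [AddCommGroup V] [Module k V]
    (π : A → Module.End k V)
    (hI : ∀ a b : A, π a * π b = π (a ⊓ b))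
    (μZ : A → A → ℤ)
    (hμ : ∀ a b : A, b ≤ a →
      (∑ c ∈ Finset.univ.filter (fun c => b ≤ c ∧ c ≤ a), μZ a c) =
        if b = a then 1 else 0)
    (s : A → Module.End k V)
    (hs : ∀ a : A, s a = ∑ b ∈ Finset.univ.filter (· ≤ a), μZ a b • π b) :
    ∀ a b : A, s b * π a = if b ≤ a then s b else 0 := by
  classical
  let : LocallyFiniteOrder A := Fintype.toLocallyFiniteOrder
  have hμ_Icc (a b : A) (hba : b ≤ a) : ∑ c ∈ Icc b a, μZ a c = if b = a then 1 else 0 := by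
    rw [← filter_le_le_eq_Icc, hμ a b hba]
  have hs_mu (a : A) : s a = ∑ b ∈ {b | b ≤ a}, mu ℤ b a • π b := by
    rw [hs a]
    refine sum_congr rfl fun b hb => ?_
    rw [eq_mu_of_sum_Icc_eq_ite μZ hμ_Icc (mem_filter.mp hb).2]
  exact moebius_mul_eq_ite_of_mul_eq_inf π s hI hs_mu
end

section
/- Let A be a finite meet semi-lattice, V a vector space, and (π_a)_{a∈A} endomorphisms of V satisfying the intersection property π_a π_b = π_{a∧b} for all a,b ∈ A. Define s_a = Σ_{b≤a} μ_A(a,b) π_b. Then s_a ∘ s_b = δ_{a,b} · s_a for all a,b ∈ A, i.e., the s_a are pairwise orthogonal idempotents. -/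
open Finset

/-!
The recursion for `μ` says that `μ`, read as a matrix, is a one-sided inverse of the zeta matrix
`ζ(a,b) = [b ≤ a]`; square matrices over `ℤ` being Dedekind-finite, it is two-sided, which gives
Möbius inversion `π_a = ∑_{c ≤ a} s_c`. Substituting this into
`π_a s_b = ∑_{d ≤ b} μ(b,d) π_{a ⊓ d}` and inverting again yields `π_a s_b = [b ≤ a] s_b`,
whence `s_a s_b = ∑_{c ≤ a} μ(a,c) [b ≤ c] s_b = δ_{a,b} s_b`.
-/

section PartialOrder

variable {A : Type*} [PartialOrder A] [Fintype A] [DecidableEq A]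
  [DecidableRel ((· ≤ ·) : A → A → Prop)]

def IsMoebiusFunction (μ : A → A → ℤ) : Prop :=
  ∀ a b : A, b ≤ a →
    (∑ c ∈ univ.filter (fun c => b ≤ c ∧ c ≤ a), μ a c) = if b = a then 1 else 0

def zetaMatrix : Matrix A A ℤ := Matrix.of fun a b => if b ≤ a then 1 else 0

def moebiusMatrix (μ : A → A → ℤ) : Matrix A A ℤ :=
  Matrix.of fun a b => if b ≤ a then μ a b else 0

def moebiusInverse {M : Type*} [AddCommGroup M] (μ : A → A → ℤ) (π : A → M) (a : A) : M :=
  ∑ b ∈ univ.filter (· ≤ a), μ a b • π b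

namespace IsMoebiusFunction

variable {μ : A → A → ℤ}

theorem moebiusMatrix_mul_zetaMatrix (hμ : IsMoebiusFunction μ) :
    moebiusMatrix μ * zetaMatrix = 1 := by
  ext a b
  simp only [Matrix.mul_apply, Matrix.one_apply, moebiusMatrix, zetaMatrix, Matrix.of_apply,
    ite_zero_mul_ite_zero, mul_one, ← sum_filter]
  by_cases hba : b ≤ a
  · simp only [and_comm, hμ a b hba, eq_comm]
  · have : univ.filter (fun c => c ≤ a ∧ b ≤ c) = ∅ :=
      filter_eq_empty_iff.mpr fun c _ h => hba (h.2.trans h.1)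
    rw [this, sum_empty, if_neg (fun h => hba h.ge)]

theorem zetaMatrix_mul_moebiusMatrix (hμ : IsMoebiusFunction μ) :
    zetaMatrix * moebiusMatrix μ = 1 :=
  mul_eq_one_comm.mp hμ.moebiusMatrix_mul_zetaMatrix

theorem sum_left_eq_ite (hμ : IsMoebiusFunction μ) (a d : A) :
    ∑ c ∈ univ.filter (fun c => a ≤ c ∧ c ≤ d), μ c a = if d = a then 1 else 0 := by
  have h := congrFun₂ hμ.zetaMatrix_mul_moebiusMatrix d a
  simp only [Matrix.mul_apply, Matrix.one_apply, moebiusMatrix, zetaMatrix, Matrix.of_apply,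
    ite_zero_mul_ite_zero, one_mul, ← sum_filter] at h
  simpa only [and_comm] using h

variable {M : Type*} [AddCommGroup M]

theorem moebiusInverse_sum_le (hμ : IsMoebiusFunction μ) (f : A → M) (b : A) :
    moebiusInverse μ (fun d => ∑ e ∈ univ.filter (· ≤ d), f e) b = f b := by
  simp only [moebiusInverse, smul_sum]
  rw [sum_comm' (t' := univ.filter (· ≤ b)) (s' := fun e => univ.filter fun d => e ≤ d ∧ d ≤ b)]
  · simp_rw [← sum_smul]
    rw [sum_congr rfl fun e he => by rw [hμ b e (mem_filter.mp he).2]]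
    simp
  · intro d e
    simp only [mem_filter, mem_univ, true_and]
    constructor
    · rintro ⟨hdb, hed⟩
      exact ⟨⟨hed, hdb⟩, hed.trans hdb⟩
    · rintro ⟨⟨hed, hdb⟩, -⟩
      exact ⟨hdb, hed⟩

theorem sum_le_moebiusInverse (hμ : IsMoebiusFunction μ) (g : A → M) (a : A) :
    ∑ c ∈ univ.filter (· ≤ a), moebiusInverse μ g c = g a := by
  simp only [moebiusInverse]
  rw [sum_comm' (t' := univ.filter (· ≤ a)) (s' := fun d => univ.filter fun c => d ≤ c ∧ c ≤ a)]
  · simp_rw [← sum_smul, hμ.sum_left_eq_ite]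
    simp
  · intro c d
    simp only [mem_filter, mem_univ, true_and]
    constructor
    · rintro ⟨hca, hdc⟩
      exact ⟨⟨hdc, hca⟩, hdc.trans hca⟩
    · rintro ⟨⟨hdc, hca⟩, -⟩
      exact ⟨hca, hdc⟩

end IsMoebiusFunction

end PartialOrder

namespace IsMoebiusFunction

variable {A : Type*} [SemilatticeInf A] [Fintype A] [DecidableEq A]
  [DecidableRel ((· ≤ ·) : A → A → Prop)] {μ : A → A → ℤ} {R : Type*} [Ring R] {π : A → R}

theorem mul_moebiusInverse (hμ : IsMoebiusFunction μ) (hI : ∀ a b : A, π a * π b = π (a ⊓ b))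
    (a b : A) : π a * moebiusInverse μ π b = if b ≤ a then moebiusInverse μ π b else 0 := by
  have hinf : ∀ d, π (a ⊓ d) =
      ∑ e ∈ univ.filter (· ≤ d), if e ≤ a then moebiusInverse μ π e else 0 := by
    intro d
    rw [← sum_filter, ← hμ.sum_le_moebiusInverse π (a ⊓ d)]
    congr 1
    ext e
    simp [and_comm]
  calc π a * moebiusInverse μ π b
      = moebiusInverse μ (fun d => π (a ⊓ d)) b := by
        simp only [moebiusInverse, mul_sum, mul_smul_comm, hI]
    _ = if b ≤ a then moebiusInverse μ π b else 0 := by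
        simp only [hinf]
        exact hμ.moebiusInverse_sum_le _ b

theorem moebiusInverse_mul_moebiusInverse (hμ : IsMoebiusFunction μ)
    (hI : ∀ a b : A, π a * π b = π (a ⊓ b)) (a b : A) :
    moebiusInverse μ π a * moebiusInverse μ π b = if a = b then moebiusInverse μ π a else 0 := by
  have hle : ∀ c, (if b ≤ c then moebiusInverse μ π b else 0) =
      ∑ e ∈ univ.filter (· ≤ c), if e = b then moebiusInverse μ π b else 0 := by
    intro c
    simp [sum_ite_eq']
  calc moebiusInverse μ π a * moebiusInverse μ π b
      = moebiusInverse μ (fun c => if b ≤ c then moebiusInverse μ π b else 0) a := by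
        rw [moebiusInverse, sum_mul]
        simp only [smul_mul_assoc, hμ.mul_moebiusInverse hI]
        rfl
    _ = if a = b then moebiusInverse μ π a else 0 := by
        simp only [hle]
        rw [hμ.moebiusInverse_sum_le]
        split_ifs with h
        · rw [h]
        · rfl

end IsMoebiusFunction

/-- Let `A` be a finite meet semi-lattice and `(π_a)` endomorphisms of `V`
satisfying the intersection property `π_a π_b = π_{a ⊓ b}`.  Then the Möbius
inverses `s_a = ∑_{b ≤ a} μ_A(a,b) • π_b` are pairwise orthogonal idempotents:
`s_a ∘ s_b = δ_{a,b} • s_a`. -/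
theorem stmt_9 {A k V : Type*} [SemilatticeInf A] [Fintype A] [DecidableEq A]
    [DecidableRel ((· ≤ ·) : A → A → Prop)]
    [Field k] [AddCommGroup V] [Module k V]
    (π : A → Module.End k V)
    (hI : ∀ a b : A, π a * π b = π (a ⊓ b))
    (μZ : A → A → ℤ)
    (hμ : ∀ a b : A, b ≤ a →
      (∑ c ∈ Finset.univ.filter (fun c => b ≤ c ∧ c ≤ a), μZ a c) =
        if b = a then 1 else 0)
    (s : A → Module.End k V)
    (hs : ∀ a : A, s a = ∑ b ∈ Finset.univ.filter (· ≤ a), μZ a b • π b) :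
    ∀ a b : A, s a * s b = if a = b then s a else 0 := by
  obtain rfl : s = moebiusInverse μZ π := funext hs
  exact IsMoebiusFunction.moebiusInverse_mul_moebiusInverse hμ hI
end

section
/- Let A be a finite poset and (π_a)_{a∈A} a collection of projectors of a vector space V such that for all a,b ∈ A, π_a π_b = Σ_{c ≤ a, c ≤ b} s_c, where s_c = Σ_{d≤c} μ_A(c,d) π_d. Then s_a s_b = δ_{a,b} s_a for all a,b ∈ A. -/
open Finset

/-!
Writing `s_b = ∑_{e ≤ b} μ(b,e) π_e` and expanding each `π_a π_e` by the intersection property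
gives `π_a s_b = ∑_{c ≤ a} (∑_{c ≤ e ≤ b} μ(b,e)) s_c = [b ≤ a] s_b` by the defining relation of
the Möbius function. Expanding `s_a` in `s_a s_b` the same way then leaves
`(∑_{b ≤ d ≤ a} μ(a,d)) s_b = δ_{a,b} s_b`.
-/

section Moebius

variable {A : Type*} [PartialOrder A] [Fintype A] [DecidableEq A]
  [DecidableRel ((· ≤ ·) : A → A → Prop)]

/-- `μ a c` stands for `μ_A(a, c)` with `c ≤ a`; the condition is `μ ∗ ζ = δ` in the incidence
algebra. -/
def IsMoebiusFun (μ : A → A → ℤ) : Prop :=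
  ∀ a b : A, b ≤ a →
    (∑ c ∈ univ.filter (fun c => b ≤ c ∧ c ≤ a), μ a c) = if b = a then 1 else 0

namespace IsMoebiusFun

variable {μ : A → A → ℤ} {M : Type*} [AddCommGroup M]

theorem sum_filter_Icc_eq (hμ : IsMoebiusFun μ) (a b : A) :
    (∑ c ∈ univ.filter (fun c => b ≤ c ∧ c ≤ a), μ a c) = if b = a then 1 else 0 := by
  by_cases hba : b ≤ a
  · exact hμ a b hba
  · rw [if_neg fun h => hba h.le, sum_eq_zero]
    intro c hc
    rw [mem_filter] at hc
    exact absurd (hc.2.1.trans hc.2.2) hba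

theorem sum_smul_ite_le (hμ : IsMoebiusFun μ) (a b : A) (x : M) :
    ∑ d ∈ univ.filter (· ≤ a), μ a d • (if b ≤ d then x else 0) = if b = a then x else 0 := by
  calc ∑ d ∈ univ.filter (· ≤ a), μ a d • (if b ≤ d then x else 0)
      = (∑ d ∈ univ.filter (fun d => b ≤ d ∧ d ≤ a), μ a d) • x := by
        rw [sum_smul, sum_filter, sum_filter]
        refine sum_congr rfl fun d _ => ?_
        by_cases h₁ : b ≤ d <;> by_cases h₂ : d ≤ a <;> simp [h₁, h₂]
    _ = if b = a then x else 0 := by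
        rw [hμ.sum_filter_Icc_eq]
        split_ifs <;> simp

theorem sum_smul_sum_le_inf (hμ : IsMoebiusFun μ) (f : A → M) (a b : A) :
    ∑ e ∈ univ.filter (· ≤ b), μ b e • ∑ c ∈ univ.filter (fun c => c ≤ a ∧ c ≤ e), f c =
      if b ≤ a then f b else 0 := by
  calc ∑ e ∈ univ.filter (· ≤ b), μ b e • ∑ c ∈ univ.filter (fun c => c ≤ a ∧ c ≤ e), f c
      = ∑ c ∈ univ.filter (· ≤ a), ∑ e ∈ univ.filter (fun e => c ≤ e ∧ e ≤ b), μ b e • f c := by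
        simp only [smul_sum]
        exact sum_comm' fun e c => by simp only [mem_filter, mem_univ, true_and]; tauto
    _ = ∑ c ∈ univ.filter (· ≤ a), if c = b then f c else 0 := by
        refine sum_congr rfl fun c _ => ?_
        rw [← sum_smul, hμ.sum_filter_Icc_eq]
        split_ifs <;> simp
    _ = if b ≤ a then f b else 0 := by
        rw [sum_ite_eq' (univ.filter (· ≤ a)) b f]
        simp

end IsMoebiusFun

end Moebius

theorem mul_moebius_sum_eq_ite_le {A R : Type*} [PartialOrder A] [Fintype A] [DecidableEq A]
    [DecidableRel ((· ≤ ·) : A → A → Prop)] [Ring R] {π s : A → R} {μ : A → A → ℤ} (hμ : IsMoebiusFun μ)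
    (hs : ∀ c : A, s c = ∑ d ∈ univ.filter (· ≤ c), μ c d • π d)
    (hI : ∀ a b : A, π a * π b = ∑ c ∈ univ.filter (fun c => c ≤ a ∧ c ≤ b), s c)
    (a b : A) :
    π a * s b = if b ≤ a then s b else 0 := by
  rw [← hμ.sum_smul_sum_le_inf s a b, hs b, mul_sum]
  simp only [mul_smul_comm, hI]

theorem stmt_10_general {A k V : Type*} [PartialOrder A] [Fintype A] [DecidableEq A]
    [DecidableRel ((· ≤ ·) : A → A → Prop)]
    [Field k] [AddCommGroup V] [Module k V]
    (π : A → Module.End k V)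
    (μZ : A → A → ℤ)
    (hμ : ∀ a b : A, b ≤ a →
      (∑ c ∈ Finset.univ.filter (fun c => b ≤ c ∧ c ≤ a), μZ a c) =
        if b = a then 1 else 0)
    (s : A → Module.End k V)
    (hs : ∀ c : A, s c = ∑ d ∈ Finset.univ.filter (· ≤ c), μZ c d • π d)
    (hI : ∀ a b : A,
      π a * π b = ∑ c ∈ Finset.univ.filter (fun c => c ≤ a ∧ c ≤ b), s c) :
    ∀ a b : A, s a * s b = if a = b then s a else 0 := by
  intro a b
  calc s a * s b = ∑ d ∈ univ.filter (· ≤ a), μZ a d • (π d * s b) := by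
        simp only [hs a, sum_mul, smul_mul_assoc]
    _ = if b = a then s b else 0 := by
        simp only [mul_moebius_sum_eq_ite_le hμ hs hI]
        exact IsMoebiusFun.sum_smul_ite_le hμ a b (s b)
    _ = if a = b then s a else 0 := by
        rcases eq_or_ne a b with rfl | hab
        · rfl
        · simp [hab, hab.symm]

/-- Let `A` be a finite poset and `(π_a)` projectors of `V` satisfying the
generalized intersection property `π_a π_b = ∑_{c ≤ a, c ≤ b} s_c`, where
`s_c = ∑_{d ≤ c} μ_A(c,d) • π_d`.  Then `s_a s_b = δ_{a,b} • s_a`. -/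
theorem stmt_10 {A k V : Type*} [PartialOrder A] [Fintype A] [DecidableEq A]
    [DecidableRel ((· ≤ ·) : A → A → Prop)]
    [Field k] [AddCommGroup V] [Module k V]
    (π : A → Module.End k V)
    (hidem : ∀ a : A, π a * π a = π a)
    (μZ : A → A → ℤ)
    (hμ : ∀ a b : A, b ≤ a →
      (∑ c ∈ Finset.univ.filter (fun c => b ≤ c ∧ c ≤ a), μZ a c) =
        if b = a then 1 else 0)
    (s : A → Module.End k V)
    (hs : ∀ c : A, s c = ∑ d ∈ Finset.univ.filter (· ≤ c), μZ c d • π d)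
    (hI : ∀ a b : A,
      π a * π b = ∑ c ∈ Finset.univ.filter (fun c => c ≤ a ∧ c ≤ b), s c) :
    ∀ a b : A, s a * s b = if a = b then s a else 0 :=
  stmt_10_general π μZ hμ s hs hI
end

section
/- Let A be a finite poset, V a vector space, and (π_a)_{a∈A} a collection of projectors of V satisfying the intersection property. Set s_a = Σ_{b≤a} μ_A(a,b) π_b and S_a = im s_a. Then for every a ∈ A the map ⊕_{b ≤ a} S_b → im π_a sending (w_b) to Σ_{b≤a} w_b is an isomorphism of vector spaces. -/
open Finset

/-!
Möbius inversion turns the intersection property into `π a * s c = [c ≤ a] s c`, and a second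
inversion gives `s b * s c = [b = c] s c`: the `s b` are orthogonal idempotents. Idempotency of
`π a` and the intersection property give `π a = ∑_{c ≤ a} s c`. For orthogonal idempotents `e i`,
applying `e i` to `∑ w_j` with `w_j ∈ im e_j` recovers `w_i`, and the range of `∑ e i` is the sum
of the ranges of the `e i`.
-/

namespace OrthogonalIdempotents

variable {R M ι : Type*} [Semiring R] [AddCommMonoid M] [Module R M] {e : ι → Module.End R M}

theorem apply_coeLinearMap_range [DecidableEq ι] (he : OrthogonalIdempotents e)
    (x : DirectSum ι fun i => LinearMap.range (e i)) (i : ι) :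
    e i (DirectSum.coeLinearMap (fun i => LinearMap.range (e i)) x) = x i := by
  induction x using DirectSum.induction_on with
  | zero => simp
  | of j v =>
    obtain ⟨w, hw⟩ := v.2
    rw [DirectSum.coeLinearMap_of, ← hw, ← Module.End.mul_apply, he.mul_eq]
    by_cases hij : i = j
    · subst hij
      rw [if_pos rfl, hw, DirectSum.of_eq_same]
    · rw [if_neg hij, DirectSum.of_eq_of_ne _ _ _ hij, LinearMap.zero_apply,
        ZeroMemClass.coe_zero]
  | add x y hx hy => simp [hx, hy]

theorem injective_coeLinearMap_range [DecidableEq ι] (he : OrthogonalIdempotents e) :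
    Function.Injective (DirectSum.coeLinearMap fun i => LinearMap.range (e i)) := by
  intro x y hxy
  ext i : 2
  rw [← he.apply_coeLinearMap_range x i, ← he.apply_coeLinearMap_range y i, hxy]

theorem range_sum [Fintype ι] (he : OrthogonalIdempotents e) :
    LinearMap.range (∑ i, e i) = ⨆ i, LinearMap.range (e i) := by
  classical
  apply le_antisymm
  · rintro _ ⟨v, rfl⟩
    rw [LinearMap.sum_apply]
    exact Submodule.sum_mem _ fun i _ => Submodule.mem_iSup_of_mem i ⟨v, rfl⟩
  · refine iSup_le fun i => ?_
    rintro _ ⟨v, rfl⟩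
    have hsum : (∑ j, e j) * e i = e i := by simp [Finset.sum_mul, he.mul_eq]
    exact ⟨e i v, by rw [← Module.End.mul_apply, hsum]⟩

end OrthogonalIdempotents

section Moebius

variable {A : Type*} [PartialOrder A] [Fintype A] [DecidableEq A]
  [DecidableRel ((· ≤ ·) : A → A → Prop)] {μ : A → A → ℤ}

theorem moebius_inversion {M : Type*} [AddCommGroup M]
    (hμ : ∀ a b : A, b ≤ a →
      (∑ c ∈ univ.filter (fun c => b ≤ c ∧ c ≤ a), μ a c) = if b = a then 1 else 0)
    (f : A → M) (a : A) :
    ∑ b ∈ univ.filter (· ≤ a), μ a b • ∑ c ∈ univ.filter (· ≤ b), f c = f a := by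
  calc ∑ b ∈ univ.filter (· ≤ a), μ a b • ∑ c ∈ univ.filter (· ≤ b), f c
      = ∑ c ∈ univ.filter (· ≤ a),
          ∑ b ∈ univ.filter (fun b => c ≤ b ∧ b ≤ a), μ a b • f c := by
        simp_rw [smul_sum]
        exact sum_comm' fun b c => by
          simp only [mem_filter, mem_univ, true_and]
          exact ⟨fun h => ⟨⟨h.2, h.1⟩, h.2.trans h.1⟩, fun h => ⟨h.1.2, h.1.1⟩⟩
    _ = ∑ c ∈ univ.filter (· ≤ a), (if c = a then f a else 0) := by
        refine sum_congr rfl fun c hc => ?_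
        rw [← sum_smul, hμ a c (mem_filter.mp hc).2]
        split_ifs with h <;> simp [h]
    _ = f a := by simp

variable {R : Type*} [Ring R] {π s : A → R}
  (hμ : ∀ a b : A, b ≤ a →
      (∑ c ∈ univ.filter (fun c => b ≤ c ∧ c ≤ a), μ a c) = if b = a then 1 else 0)
  (hs : ∀ c : A, s c = ∑ d ∈ univ.filter (· ≤ c), μ c d • π d)
  (hI : ∀ a b : A, π a * π b = ∑ c ∈ univ.filter (fun c => c ≤ a ∧ c ≤ b), s c)
include hμ hs hI

theorem mul_moebiusInverse (a c : A) : π a * s c = if c ≤ a then s c else 0 := by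
  have hπ : ∀ d, π a * π d = ∑ e ∈ univ.filter (· ≤ d), if e ≤ a then s e else 0 := by
    intro d
    rw [hI, sum_ite, sum_const_zero, add_zero, filter_filter]
    simp_rw [and_comm]
  calc π a * s c = ∑ d ∈ univ.filter (· ≤ c), μ c d • (π a * π d) := by
        rw [hs, mul_sum]; simp_rw [mul_smul_comm]
    _ = if c ≤ a then s c else 0 := by
        simp_rw [hπ]; exact moebius_inversion hμ (fun e => if e ≤ a then s e else 0) c

theorem orthogonalIdempotents_moebiusInverse : OrthogonalIdempotents s := by
  rw [OrthogonalIdempotents.iff_mul_eq]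
  intro b c
  have hδ : ∀ d, π d * s c = ∑ e ∈ univ.filter (· ≤ d), if e = c then s c else 0 := by
    intro d
    rw [mul_moebiusInverse hμ hs hI, sum_ite_eq']
    simp
  have hsb : s b * s c = if b = c then s c else 0 := by
    rw [hs b, sum_mul]
    simp_rw [smul_mul_assoc, hδ]
    exact moebius_inversion hμ (fun e => if e = c then s c else 0) b
  rw [hsb]
  split_ifs with h <;> simp only [h]

end Moebius

/-- Let `A` be a finite poset and `(π_a)` projectors of `V` satisfying the
intersection property.  With `s_a` the Möbius inverses and `S_a = im s_a`,
for every `a` the natural map `⊕_{b ≤ a} S_b → V`, `(w_b) ↦ ∑ w_b`, is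
injective with image `im π_a`; i.e. it is an isomorphism onto `im π_a`. -/
theorem stmt_11 {A k V : Type*} [PartialOrder A] [Fintype A] [DecidableEq A]
    [DecidableRel ((· ≤ ·) : A → A → Prop)]
    [Field k] [AddCommGroup V] [Module k V]
    (π : A → Module.End k V)
    (hidem : ∀ a : A, π a * π a = π a)
    (μZ : A → A → ℤ)
    (hμ : ∀ a b : A, b ≤ a →
      (∑ c ∈ Finset.univ.filter (fun c => b ≤ c ∧ c ≤ a), μZ a c) =
        if b = a then 1 else 0)
    (s : A → Module.End k V)
    (hs : ∀ c : A, s c = ∑ d ∈ Finset.univ.filter (· ≤ c), μZ c d • π d)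
    (hI : ∀ a b : A,
      π a * π b = ∑ c ∈ Finset.univ.filter (fun c => c ≤ a ∧ c ≤ b), s c) :
    ∀ a : A,
      Function.Injective
        (DirectSum.coeLinearMap
          (fun b : {b : A // b ≤ a} => LinearMap.range (s b.1))) ∧
      LinearMap.range
          (DirectSum.coeLinearMap
            (fun b : {b : A // b ≤ a} => LinearMap.range (s b.1))) =
        LinearMap.range (π a) := by
  intro a
  have he : OrthogonalIdempotents fun b : {b : A // b ≤ a} => s b.1 :=
    (orthogonalIdempotents_moebiusInverse hμ hs hI).embedding (Function.Embedding.subtype _)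
  have hπ : π a = ∑ b : {b : A // b ≤ a}, s b.1 := by
    rw [← hidem a, hI, ← sum_subtype]
    simp
  refine ⟨he.injective_coeLinearMap_range, ?_⟩
  rw [DirectSum.range_coeLinearMap, hπ, he.range_sum]
end

section
/- Let A be a finite poset, V a vector space, and (π_a)_{a∈A} a collection of projectors of V. Then (π_a) satisfies the intersection property (for all a,b: π_a π_b = Σ_{c≤a,c≤b} s_c with s the Möbius inverse of π) if and only if (π_a) is decomposable, i.e., there exist subspaces (S_a)_{a∈A⁺} (A⁺ = A with a top element 1 adjoined) with V = ⊕_{a∈A⁺} S_a and π_a(Σ_b w_b) = Σ_{b≤a} w_b for all a ∈ A and all w_b ∈ S_b. -/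
open Finset

/-!
Taking `a = b` in the intersection property and using idempotence gives `π a = ∑_{c ≤ a} s c`.
Möbius inversion then turns the intersection property into the statement that the `s c` are
orthogonal idempotents; together with `1 - ∑ c, s c` they form a complete family of orthogonal
idempotents indexed by `A⁺`, whose ranges are the summands. Conversely, on `S_d` each `π a` acts
by the indicator of `d ≤ a`, so by Möbius inversion `s c` acts by the indicator of `d = c`, and
both sides of the intersection property for `a, b` act by the indicator of `d ≤ a ∧ d ≤ b`.
-/

section OrthogonalIdempotents

variable {R I : Type*} [Ring R] {e : I → R}

lemma OrthogonalIdempotents.sum_mul_eq_ite [DecidableEq I] (he : OrthogonalIdempotents e)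
    (t : Finset I) (j : I) : (∑ i ∈ t, e i) * e j = if j ∈ t then e j else 0 := by
  simp [sum_mul, he.mul_eq]

lemma OrthogonalIdempotents.sum_mul_one_sub_sum [Fintype I] (he : OrthogonalIdempotents e)
    (t : Finset I) : (∑ i ∈ t, e i) * (1 - ∑ j, e j) = 0 := by
  rw [mul_sub, mul_one, sum_mul, sub_eq_zero]
  exact sum_congr rfl fun i _ => (he.mul_sum_of_mem (mem_univ i)).symm

theorem CompleteOrthogonalIdempotents.isInternal_range {M : Type*} [AddCommGroup M] [Module R M]
    [Fintype I] [DecidableEq I] {e : I → Module.End R M} (he : CompleteOrthogonalIdempotents e) :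
    DirectSum.IsInternal fun i => LinearMap.range (e i) := by
  apply DirectSum.isInternal_submodule_of_iSupIndep_of_iSup_eq_top
  · intro i
    have hker : ⨆ (j) (_ : j ≠ i), LinearMap.range (e j) ≤ LinearMap.ker (e i) :=
      iSup₂_le fun j hji => LinearMap.range_le_ker_iff.mpr (he.ortho hji.symm)
    refine Submodule.disjoint_def.mpr fun x hxi hx => ?_
    obtain ⟨y, rfl⟩ := hxi
    have h0 : e i (e i y) = 0 := hker hx
    rwa [← Module.End.mul_apply, (he.idem i).eq] at h0
  · refine eq_top_iff.mpr fun x _ => ?_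
    have hx : x = ∑ i, e i x := by
      rw [← LinearMap.sum_apply, he.complete, Module.End.one_apply]
    rw [hx]
    exact Submodule.sum_mem _ fun i _ => Submodule.mem_iSup_of_mem i ⟨x, rfl⟩

end OrthogonalIdempotents

section MobiusInversion

variable {A : Type*} [PartialOrder A] [Fintype A] [DecidableEq A]
  [DecidableRel ((· ≤ ·) : A → A → Prop)]

def IsMobiusFunction (μ : A → A → ℤ) : Prop :=
  ∀ a b : A, b ≤ a →
    (∑ c ∈ univ.filter (fun c => b ≤ c ∧ c ≤ a), μ a c) = if b = a then 1 else 0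

variable {μ : A → A → ℤ}

lemma sum_mobius_smul_sum_le {M : Type*} [AddCommGroup M]
    (hμ : IsMobiusFunction μ) (t : A → M) (a : A) :
    ∑ d ∈ univ.filter (· ≤ a), μ a d • ∑ c ∈ univ.filter (· ≤ d), t c = t a := by
  calc ∑ d ∈ univ.filter (· ≤ a), μ a d • ∑ c ∈ univ.filter (· ≤ d), t c
      = ∑ c ∈ univ.filter (· ≤ a),
          ∑ d ∈ univ.filter (fun d => c ≤ d ∧ d ≤ a), μ a d • t c := by
        simp only [smul_sum]
        refine sum_comm' fun d c => ?_
        simp only [mem_filter, mem_univ, true_and]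
        exact ⟨fun ⟨hda, hcd⟩ => ⟨⟨hcd, hda⟩, hcd.trans hda⟩,
          fun ⟨⟨hcd, hda⟩, _⟩ => ⟨hda, hcd⟩⟩
    _ = ∑ c ∈ univ.filter (· ≤ a), (if c = a then 1 else 0 : ℤ) • t c := by
        refine sum_congr rfl fun c hc => ?_
        rw [← sum_smul, hμ a c (mem_filter.mp hc).2]
    _ = t a := by simp

lemma sum_mobius_smul_ite_le {M : Type*} [AddCommGroup M]
    (hμ : IsMobiusFunction μ) (z : M) (a b : A) :
    ∑ d ∈ univ.filter (· ≤ a), μ a d • (if b ≤ d then z else 0) =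
      if b = a then z else 0 := by
  simpa only [sum_ite_eq, mem_filter, mem_univ, true_and]
    using sum_mobius_smul_sum_le hμ (fun c => if b = c then z else 0) a

variable {R : Type*} [Ring R] {π s : A → R}

theorem orthogonalIdempotents_of_intersection_property
    (hμ : IsMobiusFunction μ)
    (hs : ∀ c : A, s c = ∑ d ∈ univ.filter (· ≤ c), μ c d • π d)
    (hint : ∀ a b : A, π a * π b = ∑ c ∈ univ.filter (fun c => c ≤ a ∧ c ≤ b), s c) :
    OrthogonalIdempotents s := by
  have hsπ : ∀ a b, s a * π b = if a ≤ b then s a else 0 := by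
    intro a b
    have h := sum_mobius_smul_sum_le hμ (fun c => if c ≤ b then s c else 0) a
    simp only [← sum_filter, filter_filter, ← hint] at h
    rw [← h, hs a, sum_mul]
    simp only [smul_mul_assoc]
  refine OrthogonalIdempotents.iff_mul_eq.mpr fun a b => ?_
  rw [hs b, mul_sum]
  simp only [mul_smul_comm, hsπ]
  exact sum_mobius_smul_ite_le hμ (s a) b a

variable {k V : Type*} [Semiring k] [AddCommGroup V] [Module k V] {π s : A → Module.End k V}

lemma intersection_property_apply_of_forall_apply_eq_ite
    (hμ : IsMobiusFunction μ)
    (hs : ∀ c : A, s c = ∑ d ∈ univ.filter (· ≤ c), μ c d • π d)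
    {i : WithTop A} {z : V} (hz : ∀ p : A, π p z = if i ≤ (p : WithTop A) then z else 0)
    (a b : A) :
    (π a * π b) z = (∑ c ∈ univ.filter (fun c => c ≤ a ∧ c ≤ b), s c) z := by
  induction i using WithTop.recTopCoe with
  | top =>
    have hπz : ∀ p, π p z = 0 := by simpa using hz
    have hsz : ∀ c, s c z = 0 := fun c => by simp [hs c, LinearMap.sum_apply, hπz]
    simp [LinearMap.sum_apply, hπz, hsz]
  | coe d =>
    have hπz : ∀ p, π p z = if d ≤ p then z else 0 := by simpa using hz
    have hsz : ∀ c, s c z = if d = c then z else 0 := fun c => by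
      simpa only [hs c, LinearMap.sum_apply, LinearMap.smul_apply, hπz]
        using sum_mobius_smul_ite_le hμ z c d
    by_cases hb : d ≤ b <;> by_cases ha : d ≤ a <;>
      simp [LinearMap.sum_apply, hsz, hπz, ha, hb]

end MobiusInversion

/-- Equivalence theorem for collections of projectors: a collection of
projectors `(π_a)` of `V` over a finite poset `A` satisfies the intersection
property (`π_a π_b = ∑_{c ≤ a, c ≤ b} s_c`, with `s` the Möbius inverse of
`π`) iff it is decomposable: there are subspaces `(S_a)_{a ∈ A⁺}` (where
`A⁺ = A` with a top element adjoined) with `V = ⊕_{a ∈ A⁺} S_a` and each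
`π_a` acting on `S_b` as the identity if `b ≤ a` and as `0` otherwise
(i.e. `π_a (∑ w_b) = ∑_{b ≤ a} w_b`). -/
theorem stmt_12 {A k V : Type*} [PartialOrder A] [Fintype A] [DecidableEq A]
    [DecidableRel ((· ≤ ·) : A → A → Prop)]
    [Field k] [AddCommGroup V] [Module k V]
    (π : A → Module.End k V)
    (hidem : ∀ a : A, π a * π a = π a)
    (μZ : A → A → ℤ)
    (hμ : ∀ a b : A, b ≤ a →
      (∑ c ∈ Finset.univ.filter (fun c => b ≤ c ∧ c ≤ a), μZ a c) =
        if b = a then 1 else 0)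
    (s : A → Module.End k V)
    (hs : ∀ c : A, s c = ∑ d ∈ Finset.univ.filter (· ≤ c), μZ c d • π d) :
    (∀ a b : A,
        π a * π b = ∑ c ∈ Finset.univ.filter (fun c => c ≤ a ∧ c ≤ b), s c) ↔
      ∃ S : WithTop A → Submodule k V,
        DirectSum.IsInternal S ∧
          ∀ (a : A) (b : WithTop A), ∀ x ∈ S b,
            π a x = if b ≤ (a : WithTop A) then x else 0 := by
  constructor
  · intro hint
    have hπ : ∀ a, π a = ∑ c ∈ univ.filter (· ≤ a), s c := fun a => by
      rw [← hidem a, hint a a]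
      simp only [and_self]
    have horth := orthogonalIdempotents_of_intersection_property hμ hs hint
    -- `WithTop A` is `Option A`, with `⊤ = none`.
    refine ⟨fun i => LinearMap.range (Option.elim i (1 - ∑ c, s c) s),
      (CompleteOrthogonalIdempotents.option horth).isInternal_range, ?_⟩
    rintro a i _ ⟨y, rfl⟩
    rw [← Module.End.mul_apply, hπ a]
    induction i using WithTop.recTopCoe with
    | top =>
      show (_ * (1 - ∑ c, s c)) y = _
      rw [horth.sum_mul_one_sub_sum, if_neg (by simp), LinearMap.zero_apply]
    | coe c =>
      show (_ * s c) y = _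
      simp only [horth.sum_mul_eq_ite, mem_filter, mem_univ, true_and,
        WithTop.coe_le_coe]
      split_ifs <;> rfl
  · rintro ⟨S, hS, hact⟩ a b
    have hle : ⨆ i, S i ≤ LinearMap.eqLocus (π a * π b)
        (∑ c ∈ univ.filter (fun c => c ≤ a ∧ c ≤ b), s c) :=
      iSup_le fun i z hz =>
        intersection_property_apply_of_forall_apply_eq_ite hμ hs (fun p => hact p i z hz) a b
    rwa [hS.submodule_iSup_eq_top, top_le_iff, LinearMap.eqLocus_eq_top] at hle
end

section
/- Let I be a finite set, E = ∏_{i∈I}E_i with E_i finite, and ℙ a probability measure on E such that the operators π_a = E[·|ℱ_a] satisfy π_{{i}} π_{{i}^c} = π_∅ for every i ∈ I (where π_∅(f) is the constant E[f]). Then ℙ is a product measure. -/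
open Finset

/-- The marginal `ℙ_a(ω) = ∑_{ω' : ω'_a = ω_a} ℙ(ω')` of a measure on a
finite product. -/
def margP {I : Type*} [Fintype I] [DecidableEq I] {E : I → Type*}
    [∀ i, Fintype (E i)] [∀ i, DecidableEq (E i)] (P : (∀ i, E i) → ℝ)
    (a : Finset I) (ω : ∀ i, E i) : ℝ :=
  ∑ ω' ∈ Finset.univ.filter (fun ω' : ∀ i, E i => ∀ i ∈ a, ω' i = ω i), P ω'

/-- The conditional expectation `E[f | ℱ_a]` with respect to the σ-algebra
generated by the coordinates in `a`, with the convention that it vanishes on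
cylinder sets of zero marginal probability. -/
noncomputable def condExpP {I : Type*} [Fintype I] [DecidableEq I]
    {E : I → Type*} [∀ i, Fintype (E i)] [∀ i, DecidableEq (E i)]
    (P : (∀ i, E i) → ℝ) (a : Finset I) (f : (∀ i, E i) → ℝ)
    (ω : ∀ i, E i) : ℝ :=
  if margP P a ω = 0 then 0
  else (∑ ω' ∈ Finset.univ.filter (fun ω' : ∀ i, E i => ∀ i ∈ a, ω' i = ω i),
          P ω' * f ω') / margP P a ω

/-!
Test the hypothesis on the indicator `g` of the cylinder `{ω' : ω'_{{i}ᶜ} = ω_{{i}ᶜ}}`.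
Since `g` is `ℱ_{{i}ᶜ}`-measurable, `π_{{i}ᶜ} g = g`, and evaluating `π_{{i}} g = π_∅ g` at `ω`
gives `ℙ(ω) / ℙ_{{i}}(ω) = ℙ_{{i}ᶜ}(ω)`, i.e. `ℙ(ω) = ℙ_{{i}}(ω) ℙ_{{i}ᶜ}(ω)`.
Summing this factorization over a cylinder containing coordinate `i` splits off the factor
`ℙ_{{i}}`, so by induction every marginal `ℙ_b` is the product of the one-dimensional
marginals; for `b = I` this is the claim.
-/

section Cylinder

variable {I : Type*} [Fintype I] [DecidableEq I] {E : I → Type*}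
    [∀ i, Fintype (E i)] [∀ i, DecidableEq (E i)]
    {a b : Finset I} {ω ω' : ∀ i, E i}

def cylinder (a : Finset I) (ω : ∀ i, E i) : Finset (∀ i, E i) :=
  univ.filter fun ω' => ∀ i ∈ a, ω' i = ω i

lemma mem_cylinder : ω' ∈ cylinder a ω ↔ ∀ i ∈ a, ω' i = ω i := by
  simp [cylinder]

lemma self_mem_cylinder : ω ∈ cylinder a ω :=
  mem_cylinder.2 fun _ _ => rfl

lemma cylinder_anti (hab : a ⊆ b) : cylinder b ω ⊆ cylinder a ω :=
  fun _ h => mem_cylinder.2 fun i hi => mem_cylinder.1 h i (hab hi)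

lemma cylinder_eq_of_mem (h : ω' ∈ cylinder a ω) : cylinder a ω' = cylinder a ω := by
  ext ω''
  simp only [mem_cylinder] at h ⊢
  exact forall₂_congr fun i hi => by rw [h i hi]

lemma disjoint_cylinder_of_notMem (h : ω' ∉ cylinder a ω) :
    Disjoint (cylinder a ω') (cylinder a ω) := by
  rw [Finset.disjoint_left]
  intro ω'' h' h''
  rw [mem_cylinder] at h h' h''
  exact h fun i hi => (h' i hi).symm.trans (h'' i hi)

lemma cylinder_union : cylinder (a ∪ b) ω = cylinder a ω ∩ cylinder b ω := by
  ext
  simp [mem_cylinder, or_imp, forall_and]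

lemma cylinder_univ : cylinder univ ω = {ω} := by
  ext
  simp [mem_cylinder, funext_iff]

def cylinderIndicator (a : Finset I) (ω : ∀ i, E i) (ω' : ∀ i, E i) : ℝ :=
  if ω' ∈ cylinder a ω then 1 else 0

end Cylinder

section Marginal

variable {I : Type*} [Fintype I] [DecidableEq I] {E : I → Type*}
    [∀ i, Fintype (E i)] [∀ i, DecidableEq (E i)] (P : (∀ i, E i) → ℝ)
    {a b : Finset I} {ω ω' : ∀ i, E i}

lemma margP_eq_sum_cylinder : margP P a ω = ∑ ω' ∈ cylinder a ω, P ω' := rfl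

lemma margP_empty (hP1 : ∑ ω, P ω = 1) : margP P ∅ ω = 1 := by
  simpa [margP] using hP1

lemma margP_univ : margP P univ ω = P ω := by
  rw [margP_eq_sum_cylinder, cylinder_univ, sum_singleton]

lemma le_margP (hP0 : ∀ ω, 0 ≤ P ω) : P ω ≤ margP P a ω :=
  single_le_sum (fun ω' _ => hP0 ω') self_mem_cylinder

lemma margP_congr (h : ω' ∈ cylinder a ω) : margP P a ω' = margP P a ω := by
  rw [margP_eq_sum_cylinder, margP_eq_sum_cylinder, cylinder_eq_of_mem h]

lemma sum_mul_cylinderIndicator :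
    ∑ ω'' ∈ cylinder a ω', P ω'' * cylinderIndicator b ω ω'' =
      ∑ ω'' ∈ cylinder a ω' ∩ cylinder b ω, P ω'' := by
  simp only [cylinderIndicator, mul_ite, mul_one, mul_zero, sum_ite_mem]

lemma condExpP_cylinderIndicator_self :
    condExpP P a (cylinderIndicator b ω) ω =
      if margP P a ω = 0 then 0 else margP P (a ∪ b) ω / margP P a ω := by
  rw [condExpP, ← cylinder, sum_mul_cylinderIndicator, ← cylinder_union]
  rfl

lemma condExpP_cylinderIndicator (h : margP P a ω ≠ 0) :
    condExpP P a (cylinderIndicator a ω) = cylinderIndicator a ω := by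
  funext ω'
  rw [condExpP, ← cylinder, sum_mul_cylinderIndicator, cylinderIndicator]
  by_cases hω' : ω' ∈ cylinder a ω
  · rw [cylinder_eq_of_mem hω', inter_self, margP_congr P hω', if_neg h, if_pos hω',
      ← margP_eq_sum_cylinder, div_self h]
  · rw [disjoint_iff_inter_eq_empty.1 (disjoint_cylinder_of_notMem hω'), sum_empty,
      zero_div, if_neg hω', ite_self]

/-- A point `ω''` of the `a ∩ b`-cylinder lies in the `a`-cylinder of exactly one point of the
`b`-cylinder, namely `a.piecewise ω'' ω`. -/
lemma sum_margP_cylinder (hab : a ∪ b = univ) :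
    ∑ ω' ∈ cylinder b ω, margP P a ω' = margP P (a ∩ b) ω := by
  simp only [margP_eq_sum_cylinder]
  rw [sum_comm' (s' := fun ω'' => {a.piecewise ω'' ω}) (t' := cylinder (a ∩ b) ω),
    sum_congr rfl fun _ _ => sum_singleton _ _]
  intro ω' ω''
  simp only [mem_cylinder, mem_singleton, mem_inter]
  have hb : ∀ j ∉ a, j ∈ b := fun j hj => by
    simpa [hj] using (eq_univ_iff_forall.1 hab) j
  constructor
  · rintro ⟨hω', hω''⟩
    refine ⟨funext fun j => ?_, fun j hj => (hω'' j hj.1).trans (hω' j hj.2)⟩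
    by_cases hj : j ∈ a
    · rw [piecewise_eq_of_mem _ _ _ hj, hω'' j hj]
    · rw [piecewise_eq_of_notMem _ _ _ hj, hω' j (hb j hj)]
  · rintro ⟨rfl, hω''⟩
    refine ⟨fun j hj => ?_, fun j hj => (piecewise_eq_of_mem _ _ _ hj).symm⟩
    by_cases hja : j ∈ a
    · rw [piecewise_eq_of_mem _ _ _ hja, hω'' j ⟨hja, hj⟩]
    · rw [piecewise_eq_of_notMem _ _ _ hja]

lemma apply_eq_margP_singleton_mul_margP_compl (hP0 : ∀ ω, 0 ≤ P ω) (hP1 : ∑ ω, P ω = 1)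
    (h : ∀ (i : I) (f : (∀ i, E i) → ℝ),
      condExpP P {i} (condExpP P {i}ᶜ f) = condExpP P ∅ f)
    (i : I) (ω : ∀ i, E i) :
    P ω = margP P {i} ω * margP P {i}ᶜ ω := by
  by_cases hc : margP P {i}ᶜ ω = 0
  · rw [hc, mul_zero]
    exact le_antisymm (hc ▸ le_margP P hP0) (hP0 ω)
  have key := congrFun (h i (cylinderIndicator {i}ᶜ ω)) ω
  rw [condExpP_cylinderIndicator P hc, condExpP_cylinderIndicator_self,
    condExpP_cylinderIndicator_self, margP_empty P hP1, if_neg one_ne_zero, div_one,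
    empty_union, union_compl, margP_univ] at key
  split_ifs at key with hs
  · exact absurd key.symm hc
  · rw [div_eq_iff hs] at key
    rw [key, mul_comm]

lemma margP_insert {i : I} (hfact : ∀ ω, P ω = margP P {i} ω * margP P {i}ᶜ ω)
    (hi : i ∉ b) (ω : ∀ i, E i) :
    margP P (insert i b) ω = margP P {i} ω * margP P b ω := by
  have hunion : {i}ᶜ ∪ insert i b = univ := by
    ext j
    by_cases hj : j = i <;> simp [hj]
  have hinter : {i}ᶜ ∩ insert i b = b := by
    ext j
    by_cases hj : j = i <;> simp [hj, hi]
  calc margP P (insert i b) ω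
      = ∑ ω' ∈ cylinder (insert i b) ω, margP P {i} ω * margP P {i}ᶜ ω' := by
        refine sum_congr rfl fun ω' hω' => ?_
        rw [hfact, margP_congr P (cylinder_anti (singleton_subset_iff.2 (mem_insert_self i b)) hω')]
    _ = margP P {i} ω * margP P b ω := by
        rw [← mul_sum, sum_margP_cylinder P hunion, hinter]

lemma margP_eq_prod (hP1 : ∑ ω, P ω = 1)
    (hfact : ∀ i ω, P ω = margP P {i} ω * margP P {i}ᶜ ω) (b : Finset I) (ω : ∀ i, E i) :
    margP P b ω = ∏ i ∈ b, margP P {i} ω := by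
  induction b using Finset.induction_on with
  | empty => rw [margP_empty P hP1, prod_empty]
  | insert i b hi ih => rw [margP_insert P (hfact i) hi, ih, prod_insert hi]

lemma margP_singleton (i : I) (ω : ∀ i, E i) :
    margP P {i} ω = ∑ ω' ∈ univ.filter (fun ω' : ∀ i, E i => ω' i = ω i), P ω' := by
  simp [margP]

end Marginal

/-- If the conditional expectations of `ℙ` satisfy
`π_{{i}} ∘ π_{{i}ᶜ} = π_∅` for every `i ∈ I`, then `ℙ` is a product
measure. -/
theorem stmt_15 {I : Type*} [Fintype I] [DecidableEq I] {E : I → Type*}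
    [∀ i, Fintype (E i)] [∀ i, DecidableEq (E i)]
    (P : (∀ i, E i) → ℝ) (hP0 : ∀ ω, 0 ≤ P ω) (hP1 : ∑ ω, P ω = 1)
    (h : ∀ (i : I) (f : (∀ i, E i) → ℝ),
      condExpP P {i} (condExpP P {i}ᶜ f) = condExpP P ∅ f) :
    ∃ p : ∀ i, E i → ℝ,
      (∀ i x, 0 ≤ p i x) ∧ (∀ i, ∑ x, p i x = 1) ∧
        ∀ ω, P ω = ∏ i, p i (ω i) := by
  have hfact := apply_eq_margP_singleton_mul_margP_compl P hP0 hP1 h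
  refine ⟨fun i x => ∑ ω ∈ univ.filter (fun ω : ∀ i, E i => ω i = x), P ω,
    fun i x => sum_nonneg fun ω _ => hP0 ω, fun i => ?_, fun ω => ?_⟩
  · rw [← hP1]
    exact sum_fiberwise_of_maps_to (fun ω _ => mem_univ _) P
  · rw [← margP_univ P, margP_eq_prod P hP1 hfact]
    exact prod_congr rfl fun i _ => margP_singleton P i ω
end
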